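/- arXiv:1202.0711 — 3 statements merged into one kernel-verified Lean document; each statement's English description precedes it below -/
import Mathlib

section
/- Let R be a commutative ring, n ≥ 1, Λ = M_{n×n}(R), and let M₁ --ι--> M₂ ->> M₃ be an exact sequence of finitely presented Λ-modules (the map ι is not required to be injective, and the second map is surjective). Then Fit_Λ(M₁) · Fit_Λ(M₃) ⊆ Fit_Λ(M₂). -/
open Matrix

section FitDefs

variable (R : Type*) [CommRing R]

/-- The ideal of all maximal minors of a rectangular matrix (this is the zero
ideal when there are fewer rows than columns). -/
noncomputable def minorsIdeal {a b : ℕ} (H : Matrix (Fin a) (Fin b) R) : Ideal R :=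
  Ideal.span {x : R | ∃ f : Fin b → Fin a, x = ((H.submatrix f id).det)}

/-- `(H, π)` is a finite presentation `R^a --H--> R^b --π->> M` of the `R`-module `M`,
where `H` acts by right multiplication on row vectors. -/
def IsPresentation {a b : ℕ} (H : Matrix (Fin a) (Fin b) R) (M : Type*)
    [AddCommGroup M] [Module R M] (π : (Fin b → R) →ₗ[R] M) : Prop :=
  Function.Surjective π ∧ LinearMap.ker π = LinearMap.range H.vecMulLinear

/-- The (zeroth) Fitting ideal of an `R`-module, defined as the supremum over all
finite presentations of the ideal of maximal minors; for a finitely presented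
module this agrees with the classical Fitting ideal computed from any single
presentation, since the latter is independent of the chosen presentation. -/
noncomputable def fitIdeal (M : Type*) [AddCommGroup M] [Module R M] : Ideal R :=
  ⨆ (a : ℕ) (b : ℕ) (H : Matrix (Fin a) (Fin b) R) (π : (Fin b → R) →ₗ[R] M)
    (_ : IsPresentation R H M π), minorsIdeal R H

end FitDefs

section MatrixModule

variable (n : ℕ) (R : Type*) [CommRing R] (M : Type*) [AddCommGroup M]
  [Module (Matrix (Fin n) (Fin n) R) M] [Module R M]
  [IsScalarTower R (Matrix (Fin n) (Fin n) R) M]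

/-- Left multiplication by the matrix unit `e_{ii}` as an `R`-linear endomorphism
of a module over the matrix ring. -/
noncomputable def eMul (i : Fin n) : M →ₗ[R] M where
  toFun x := Matrix.single i i (1 : R) • x
  map_add' x y := smul_add _ x y
  map_smul' r x := (smul_comm r (Matrix.single i i (1 : R)) x).symm

/-- The `R`-submodule `e_{ii}M` of a module `M` over the matrix ring. -/
noncomputable def eComponent (i : Fin n) : Submodule R M :=
  LinearMap.range (eMul n R M i)

end MatrixModule

/-! The corner functor `M ↦ e₁₁M` is exact (as `e₁₁` is idempotent) and keeps `M₂` finitely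
presented over `R`, so it suffices to treat an exact sequence `N₁ → N₂ ↠ N₃` of `R`-modules
with `N₂` finitely presented. Given presentations `H₁` of `N₁` and `H₃` of `N₃`, the images of
the generators of `N₁` together with lifts of the generators of `N₃` generate `N₂`, and among
their relations are the rows of a block lower-triangular matrix `[H₁ 0; C H₃]`. Adding finitely
many rows turns this into a presentation matrix of `N₂`, so each product of maximal minors of
`H₁` and `H₃`, being a maximal minor of the block matrix, lies in `Fit(N₂)`. -/

section Presentations

variable {R : Type*} [CommRing R] {M : Type*} [AddCommGroup M] [Module R M] {a b : ℕ}

lemma minorsIdeal_submatrix_le {a' : ℕ} (H : Matrix (Fin a) (Fin b) R) (r : Fin a' → Fin a) :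
    minorsIdeal R (H.submatrix r id) ≤ minorsIdeal R H :=
  Ideal.span_mono fun _ ⟨f, hf⟩ ↦ ⟨r ∘ f, hf⟩

namespace IsPresentation

variable {H : Matrix (Fin a) (Fin b) R} {π : (Fin b → R) →ₗ[R] M}

lemma map_row (h : IsPresentation R H M π) (p : Fin a) : π (H p) = 0 := by
  have hp : H p ∈ Submodule.span R (Set.range H.row) := Submodule.subset_span ⟨p, rfl⟩
  rwa [← range_vecMulLinear, ← h.2] at hp

lemma minorsIdeal_le_fitIdeal (h : IsPresentation R H M π) : minorsIdeal R H ≤ fitIdeal R M :=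
  le_iSup_of_le a <| le_iSup_of_le b <| le_iSup_of_le H <| le_iSup_of_le π <| le_iSup_of_le h le_rfl

end IsPresentation

lemma minorsIdeal_le_fitIdeal_of_map_row_eq_zero [Module.FinitePresentation R M]
    {H : Matrix (Fin a) (Fin b) R} {π : (Fin b → R) →ₗ[R] M} (hπ : Function.Surjective π)
    (hH : ∀ p, π (H p) = 0) : minorsIdeal R H ≤ fitIdeal R M := by
  obtain ⟨k, K, hK⟩ := Submodule.fg_iff_exists_fin_generating_family.mp
    (Module.FinitePresentation.fg_ker π hπ)
  let H' : Matrix (Fin (a + k)) (Fin b) R := of (Fin.append H.row K)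
  have H'_castAdd (p : Fin a) : H' (Fin.castAdd k p) = H p := Fin.append_left H.row K p
  have H'_natAdd (l : Fin k) : H' (Fin.natAdd a l) = K l := Fin.append_right H.row K l
  have hH' : IsPresentation R H' M π := by
    refine ⟨hπ, le_antisymm ?_ ?_⟩ <;> rw [range_vecMulLinear]
    · exact hK ▸ Submodule.span_mono fun _ ⟨l, hl⟩ ↦ ⟨Fin.natAdd a l, (H'_natAdd l).trans hl⟩
    · refine Submodule.span_le.mpr fun _ ⟨i, hi⟩ ↦ hi ▸ ?_
      refine Fin.addCases (fun p ↦ ?_) (fun l ↦ ?_) i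
      · change π (H' _) = 0
        rw [H'_castAdd]
        exact hH p
      · change H' _ ∈ LinearMap.ker π
        rw [H'_natAdd, ← hK]
        exact Submodule.subset_span ⟨l, rfl⟩
  calc minorsIdeal R H = minorsIdeal R (H'.submatrix (Fin.castAdd k) id) := by
        congr; ext p j; simp [H'_castAdd]
    _ ≤ minorsIdeal R H' := minorsIdeal_submatrix_le H' _
    _ ≤ fitIdeal R M := hH'.minorsIdeal_le_fitIdeal

end Presentations

section LowerBlockTriangular

variable {R : Type*} [CommRing R] {a₁ a₃ b₁ b₃ : ℕ} (H₁ : Matrix (Fin a₁) (Fin b₁) R)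
  (C : Matrix (Fin a₃) (Fin b₁) R) (H₃ : Matrix (Fin a₃) (Fin b₃) R)

def lowerLowerBlockTriangular : Matrix (Fin (a₁ + a₃)) (Fin (b₁ + b₃)) R :=
  (fromBlocks H₁ 0 C H₃).reindex finSumFinEquiv finSumFinEquiv

lemma lowerLowerBlockTriangular_castAdd (p : Fin a₁) :
    lowerLowerBlockTriangular H₁ C H₃ (Fin.castAdd a₃ p) = Fin.append (H₁ p) 0 := by
  ext j
  refine Fin.addCases (fun q ↦ ?_) (fun u ↦ ?_) j <;> simp [lowerLowerBlockTriangular]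

lemma lowerLowerBlockTriangular_natAdd (t : Fin a₃) :
    lowerLowerBlockTriangular H₁ C H₃ (Fin.natAdd a₁ t) = Fin.append (C t) (H₃ t) := by
  ext j
  refine Fin.addCases (fun q ↦ ?_) (fun u ↦ ?_) j <;> simp [lowerLowerBlockTriangular]

lemma minorsIdeal_mul_le_minorsIdeal_lowerLowerBlockTriangular :
    minorsIdeal R H₁ * minorsIdeal R H₃ ≤ minorsIdeal R (lowerLowerBlockTriangular H₁ C H₃) := by
  rw [minorsIdeal, minorsIdeal, Ideal.span_mul_span', Ideal.span_le]
  rintro _ ⟨_, ⟨σ, rfl⟩, _, ⟨τ, rfl⟩, rfl⟩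
  refine Ideal.subset_span ⟨finSumFinEquiv ∘ Sum.map σ τ ∘ finSumFinEquiv.symm, ?_⟩
  have : (lowerLowerBlockTriangular H₁ C H₃).submatrix (finSumFinEquiv ∘ Sum.map σ τ ∘ finSumFinEquiv.symm) id
      = (fromBlocks (H₁.submatrix σ id) 0 (C.submatrix τ id) (H₃.submatrix τ id)).reindex
          finSumFinEquiv finSumFinEquiv := by
    ext i j
    rcases h : finSumFinEquiv.symm i with p | t <;> rcases h' : finSumFinEquiv.symm j with q | u <;>
      simp [lowerLowerBlockTriangular, h, h']
  rw [this, det_reindex_self, det_fromBlocks_zero₁₂]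

end LowerBlockTriangular

section Extension

variable {R : Type*} [CommRing R] {N₁ N₂ N₃ : Type*} [AddCommGroup N₁] [AddCommGroup N₂]
  [AddCommGroup N₃] [Module R N₁] [Module R N₂] [Module R N₃] [Module.FinitePresentation R N₂]

theorem minorsIdeal_mul_le_fitIdeal_of_exact (f : N₁ →ₗ[R] N₂) (g : N₂ →ₗ[R] N₃)
    (hg : Function.Surjective g) (hfg : LinearMap.range f = LinearMap.ker g) {a₁ b₁ a₃ b₃ : ℕ}
    {H₁ : Matrix (Fin a₁) (Fin b₁) R} {π₁ : (Fin b₁ → R) →ₗ[R] N₁}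
    {H₃ : Matrix (Fin a₃) (Fin b₃) R} {π₃ : (Fin b₃ → R) →ₗ[R] N₃}
    (h₁ : IsPresentation R H₁ N₁ π₁) (h₃ : IsPresentation R H₃ N₃ π₃) :
    minorsIdeal R H₁ * minorsIdeal R H₃ ≤ fitIdeal R N₂ := by
  obtain ⟨s, hs⟩ := Module.projective_lifting_property g π₃ hg
  let π₂ : (Fin (b₁ + b₃) → R) →ₗ[R] N₂ :=
    f ∘ₗ π₁ ∘ₗ LinearMap.funLeft R R (Fin.castAdd b₃) + s ∘ₗ LinearMap.funLeft R R (Fin.natAdd b₁)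
  have π₂_append (u : Fin b₁ → R) (w : Fin b₃ → R) : π₂ (Fin.append u w) = f (π₁ u) + s w := by
    have hu : LinearMap.funLeft R R (Fin.castAdd b₃) (Fin.append u w) = u :=
      funext (Fin.append_left u w)
    have hw : LinearMap.funLeft R R (Fin.natAdd b₁) (Fin.append u w) = w :=
      funext (Fin.append_right u w)
    simp only [π₂, LinearMap.add_apply, LinearMap.comp_apply, hu, hw]
  have exists_of_g_eq_zero (y : N₂) (hy : g y = 0) : ∃ u, f (π₁ u) = y := by
    obtain ⟨x, rfl⟩ : y ∈ LinearMap.range f := hfg ▸ hy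
    obtain ⟨u, rfl⟩ := h₁.1 x
    exact ⟨u, rfl⟩
  have hπ₂ : Function.Surjective π₂ := by
    intro y
    obtain ⟨w, hw⟩ := h₃.1 (g y)
    obtain ⟨u, hu⟩ := exists_of_g_eq_zero (y - s w) (by rw [map_sub, ← LinearMap.comp_apply, hs, hw, sub_self])
    exact ⟨Fin.append u w, by rw [π₂_append, hu, sub_add_cancel]⟩
  choose C hC using fun t ↦ exists_of_g_eq_zero (-s (H₃ t))
    (by rw [map_neg, ← LinearMap.comp_apply, hs, h₃.map_row, neg_zero])
  refine (minorsIdeal_mul_le_minorsIdeal_lowerLowerBlockTriangular H₁ (of C) H₃).trans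
    (minorsIdeal_le_fitIdeal_of_map_row_eq_zero hπ₂ fun i ↦ ?_)
  refine Fin.addCases (fun p ↦ ?_) (fun t ↦ ?_) i
  · rw [lowerLowerBlockTriangular_castAdd, π₂_append, h₁.map_row, map_zero, map_zero, add_zero]
  · rw [lowerLowerBlockTriangular_natAdd, π₂_append]
    exact eq_neg_iff_add_eq_zero.mp (hC t)

theorem fitIdeal_mul_fitIdeal_le_of_exact (f : N₁ →ₗ[R] N₂) (g : N₂ →ₗ[R] N₃)
    (hg : Function.Surjective g) (hfg : LinearMap.range f = LinearMap.ker g) :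
    fitIdeal R N₁ * fitIdeal R N₃ ≤ fitIdeal R N₂ := by
  simp only [fitIdeal, Submodule.iSup_mul, Submodule.mul_iSup, iSup_le_iff]
  exact fun _ _ _ _ h₃ _ _ _ _ h₁ ↦ minorsIdeal_mul_le_fitIdeal_of_exact f g hg hfg h₁ h₃

end Extension

lemma Module.FinitePresentation.trans_of_ring (R A M : Type*) [CommRing R] [Ring A]
    [Algebra R A] [Module.FinitePresentation R A] [AddCommGroup M] [Module A M] [Module R M]
    [IsScalarTower R A M] [Module.FinitePresentation A M] : Module.FinitePresentation R M := by
  obtain ⟨m, φ, hφ⟩ := Module.Finite.exists_fin' A M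
  have : Module.Finite A (LinearMap.ker φ) :=
    Module.Finite.iff_fg.mpr (Module.FinitePresentation.fg_ker φ hφ)
  have : Module.Finite R (LinearMap.ker φ) := Module.Finite.trans A _
  refine Module.finitePresentation_of_surjective (φ.restrictScalars R) hφ ?_
  rw [LinearMap.ker_restrictScalars]
  exact Module.Finite.iff_fg.mp ‹_›

lemma Module.FinitePresentation.range_of_isIdempotentElem {R M : Type*} [Ring R]
    [AddCommGroup M] [Module R M] [Module.FinitePresentation R M] {p : M →ₗ[R] M}
    (hp : IsIdempotentElem p) : Module.FinitePresentation R (LinearMap.range p) := by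
  refine Module.finitePresentation_of_surjective p.rangeRestrict p.surjective_rangeRestrict ?_
  rw [LinearMap.ker_rangeRestrict, LinearMap.IsIdempotentElem.ker_eq_range hp]
  exact Submodule.fg_range _

section Corner

variable {n : ℕ} {R : Type*} [CommRing R] (i : Fin n)

section

variable (M : Type*) [AddCommGroup M] [Module (Matrix (Fin n) (Fin n) R) M] [Module R M]
  [IsScalarTower R (Matrix (Fin n) (Fin n) R) M]

lemma isIdempotentElem_eMul : IsIdempotentElem (eMul n R M i) :=
  LinearMap.ext fun x ↦ by
    simp only [Module.End.mul_apply, eMul, LinearMap.coe_mk, AddHom.coe_mk, smul_smul,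
      single_mul_single_same, one_mul]

lemma mem_eComponent_iff {x : M} : x ∈ eComponent n R M i ↔ single i i (1 : R) • x = x :=
  LinearMap.IsIdempotentElem.mem_range_iff (isIdempotentElem_eMul i M)

lemma finitePresentation_eComponent [Module.FinitePresentation R M] :
    Module.FinitePresentation R (eComponent n R M i) :=
  .range_of_isIdempotentElem (isIdempotentElem_eMul i M)

end

variable {M₁ M₂ M₃ : Type*} [AddCommGroup M₁] [AddCommGroup M₂] [AddCommGroup M₃]
  [Module (Matrix (Fin n) (Fin n) R) M₁] [Module (Matrix (Fin n) (Fin n) R) M₂]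
  [Module (Matrix (Fin n) (Fin n) R) M₃] [Module R M₁] [Module R M₂] [Module R M₃]
  [IsScalarTower R (Matrix (Fin n) (Fin n) R) M₁] [IsScalarTower R (Matrix (Fin n) (Fin n) R) M₂]
  [IsScalarTower R (Matrix (Fin n) (Fin n) R) M₃]

noncomputable def eComponentMap (φ : M₁ →ₗ[Matrix (Fin n) (Fin n) R] M₂) :
    eComponent n R M₁ i →ₗ[R] eComponent n R M₂ i :=
  (φ.restrictScalars R).restrict fun x hx ↦ by
    rw [mem_eComponent_iff] at hx ⊢
    rw [LinearMap.restrictScalars_apply, ← map_smul, hx]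

lemma mem_range_eComponentMap_iff (φ : M₁ →ₗ[Matrix (Fin n) (Fin n) R] M₂)
    (y : eComponent n R M₂ i) : y ∈ LinearMap.range (eComponentMap i φ) ↔
      (y : M₂) ∈ LinearMap.range φ := by
  refine ⟨fun ⟨x, hx⟩ ↦ ⟨x, congrArg Subtype.val hx⟩, fun ⟨x, hx⟩ ↦ ?_⟩
  refine ⟨⟨eMul n R M₁ i x, x, rfl⟩, Subtype.ext ?_⟩
  change φ (single i i (1 : R) • x) = y
  rw [map_smul, hx]
  exact (mem_eComponent_iff i M₂).mp y.2

lemma eComponentMap_surjective {φ : M₁ →ₗ[Matrix (Fin n) (Fin n) R] M₂}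
    (hφ : Function.Surjective φ) : Function.Surjective (eComponentMap i φ) :=
  fun y ↦ (mem_range_eComponentMap_iff i φ y).mpr (hφ y)

lemma range_eComponentMap_eq_ker {φ : M₁ →ₗ[Matrix (Fin n) (Fin n) R] M₂}
    {ψ : M₂ →ₗ[Matrix (Fin n) (Fin n) R] M₃} (h : LinearMap.range φ = LinearMap.ker ψ) :
    LinearMap.range (eComponentMap i φ) = LinearMap.ker (eComponentMap i ψ) := by
  ext y
  rw [mem_range_eComponentMap_iff, h, LinearMap.mem_ker, LinearMap.mem_ker, ← Subtype.val_inj]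
  rfl

end Corner

theorem fitIdeal_mul_le_of_exact_general (n : ℕ) (hn : 0 < n) (R : Type*) [CommRing R]
    (M₁ M₂ M₃ : Type*) [AddCommGroup M₁] [AddCommGroup M₂] [AddCommGroup M₃]
    [Module (Matrix (Fin n) (Fin n) R) M₁] [Module (Matrix (Fin n) (Fin n) R) M₂]
    [Module (Matrix (Fin n) (Fin n) R) M₃]
    [Module R M₁] [Module R M₂] [Module R M₃]
    [IsScalarTower R (Matrix (Fin n) (Fin n) R) M₁]
    [IsScalarTower R (Matrix (Fin n) (Fin n) R) M₂]
    [IsScalarTower R (Matrix (Fin n) (Fin n) R) M₃]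
    [Module.FinitePresentation (Matrix (Fin n) (Fin n) R) M₂]
    (ι : M₁ →ₗ[Matrix (Fin n) (Fin n) R] M₂)
    (g : M₂ →ₗ[Matrix (Fin n) (Fin n) R] M₃)
    (hg : Function.Surjective g) (hexact : LinearMap.range ι = LinearMap.ker g) :
    fitIdeal R (eComponent n R M₁ ⟨0, hn⟩) * fitIdeal R (eComponent n R M₃ ⟨0, hn⟩) ≤
      fitIdeal R (eComponent n R M₂ ⟨0, hn⟩) := by
  have : Module.FinitePresentation R (Matrix (Fin n) (Fin n) R) :=
    Module.finitePresentation_of_projective _ _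
  have : Module.FinitePresentation R M₂ :=
    .trans_of_ring R (Matrix (Fin n) (Fin n) R) M₂
  have := finitePresentation_eComponent (R := R) ⟨0, hn⟩ M₂
  exact fitIdeal_mul_fitIdeal_le_of_exact (eComponentMap _ ι) (eComponentMap _ g)
    (eComponentMap_surjective _ hg) (range_eComponentMap_eq_ker _ hexact)

/-- If `M₁ --ι--> M₂ ->> M₃` is an exact sequence of finitely presented modules over
`Λ = M_{n×n}(R)` (with `ι` not necessarily injective and the second map surjective),
then `Fit_Λ(M₁) · Fit_Λ(M₃) ⊆ Fit_Λ(M₂)`. -/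
theorem fitIdeal_mul_le_of_exact (n : ℕ) (hn : 0 < n) (R : Type*) [CommRing R]
    (M₁ M₂ M₃ : Type*) [AddCommGroup M₁] [AddCommGroup M₂] [AddCommGroup M₃]
    [Module (Matrix (Fin n) (Fin n) R) M₁] [Module (Matrix (Fin n) (Fin n) R) M₂]
    [Module (Matrix (Fin n) (Fin n) R) M₃]
    [Module R M₁] [Module R M₂] [Module R M₃]
    [IsScalarTower R (Matrix (Fin n) (Fin n) R) M₁]
    [IsScalarTower R (Matrix (Fin n) (Fin n) R) M₂]
    [IsScalarTower R (Matrix (Fin n) (Fin n) R) M₃]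
    [Module.FinitePresentation (Matrix (Fin n) (Fin n) R) M₁]
    [Module.FinitePresentation (Matrix (Fin n) (Fin n) R) M₂]
    [Module.FinitePresentation (Matrix (Fin n) (Fin n) R) M₃]
    (ι : M₁ →ₗ[Matrix (Fin n) (Fin n) R] M₂)
    (g : M₂ →ₗ[Matrix (Fin n) (Fin n) R] M₃)
    (hg : Function.Surjective g) (hexact : LinearMap.range ι = LinearMap.ker g) :
    fitIdeal R (eComponent n R M₁ ⟨0, hn⟩) * fitIdeal R (eComponent n R M₃ ⟨0, hn⟩) ≤
      fitIdeal R (eComponent n R M₂ ⟨0, hn⟩) :=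
  fitIdeal_mul_le_of_exact_general n hn R M₁ M₂ M₃ ι g hg hexact
end

section
/- Let R be a commutative ring, n ≥ 1, and Λ = M_{n×n}(R). Every finitely generated two-sided ideal I of Λ is of the form I = M_{n×n}(J) for an ideal J of R, so that Λ/I ≅ M_{n×n}(R/J); moreover for such I one has Fit_Λ(Λ/I) = J^n. -/
open Matrix

/-!
Two-sided ideals of `M_n(R)` are exactly the ideals `M_n(J)` (`TwoSidedIdeal.equivMatrix`), and
`J` is finitely generated when `M_n(J)` is, as its image under an entry map. The first-row map
`R^n → e₁₁(Λ/M_n(J))` is surjective with kernel `J^n ⊆ R^n`, and the `n × n` determinants of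
vectors in `J^n` generate the ideal power `J^n`.

What remains is Fitting's lemma: the ideal generated by the maximal minors of a presentation
depends only on the module. Two generating families are compared through their concatenation, and
appending a redundant generator `∑ cᵢ gᵢ` changes the kernel of the presentation by a unimodular
change of coordinates into `K ⊕ R`, whose determinantal ideal is that of `K` by Laplace expansion
along the new column.
-/

namespace Submodule

variable {R : Type*} [CommRing R] {ι : Type*} [Fintype ι] [DecidableEq ι]

noncomputable def detIdeal (K : Submodule R (ι → R)) : Ideal R :=
  Ideal.span {x | ∃ V : Matrix ι ι R, (∀ i, V i ∈ K) ∧ V.det = x}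

theorem det_mem_detIdeal {K : Submodule R (ι → R)} {V : Matrix ι ι R} (hV : ∀ i, V i ∈ K) :
    V.det ∈ K.detIdeal :=
  Ideal.subset_span ⟨V, hV, rfl⟩

theorem detIdeal_le_iff {K : Submodule R (ι → R)} {J : Ideal R} :
    K.detIdeal ≤ J ↔ ∀ V : Matrix ι ι R, (∀ i, V i ∈ K) → V.det ∈ J := by
  simp [detIdeal, Ideal.span_le, Set.subset_def]

theorem detIdeal_comap_vecMulLinear_le (K : Submodule R (ι → R)) {A : Matrix ι ι R}
    (hA : IsUnit A.det) : (K.comap A.vecMulLinear).detIdeal ≤ K.detIdeal := by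
  refine detIdeal_le_iff.2 fun V hV => ?_
  have hVA : (V * A).det ∈ K.detIdeal := det_mem_detIdeal fun i => by
    simpa [Matrix.mul_apply_eq_vecMul] using hV i
  rw [Matrix.det_mul] at hVA
  exact (Ideal.mul_unit_mem_iff_mem _ hA).1 hVA

theorem detIdeal_comap_vecMulLinear (K : Submodule R (ι → R)) {A : Matrix ι ι R}
    (hA : IsUnit A.det) : (K.comap A.vecMulLinear).detIdeal = K.detIdeal := by
  refine le_antisymm (K.detIdeal_comap_vecMulLinear_le hA) ?_
  convert (K.comap A.vecMulLinear).detIdeal_comap_vecMulLinear_le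
    (A.isUnit_nonsing_inv_det hA) using 2
  ext v
  simp [Matrix.vecMul_vecMul, Matrix.nonsing_inv_mul _ hA]

theorem detIdeal_comap_funLeft {ι' : Type*} [Fintype ι'] [DecidableEq ι'] (K : Submodule R (ι → R))
    (e : ι ≃ ι') : (K.comap (LinearMap.funLeft R R e)).detIdeal = K.detIdeal := by
  refine le_antisymm (detIdeal_le_iff.2 fun V hV => ?_) (detIdeal_le_iff.2 fun V hV => ?_)
  · rw [← Matrix.det_submatrix_equiv_self e V]
    exact det_mem_detIdeal fun i => hV (e i)
  · rw [← Matrix.det_submatrix_equiv_self e.symm V]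
    refine det_mem_detIdeal fun i => ?_
    have hrow : LinearMap.funLeft R R e (V.submatrix e.symm e.symm i) = V (e.symm i) := by
      ext; simp [LinearMap.funLeft_apply]
    rw [mem_comap, hrow]
    exact hV (e.symm i)

theorem detIdeal_comap_funLeft_castSucc {b : ℕ} (K : Submodule R (Fin b → R)) :
    (K.comap (LinearMap.funLeft R R Fin.castSucc)).detIdeal = K.detIdeal := by
  refine le_antisymm (detIdeal_le_iff.2 fun W hW => ?_) (detIdeal_le_iff.2 fun V hV => ?_)
  · rw [Matrix.det_succ_column W (Fin.last b)]
    refine Ideal.sum_mem _ fun i _ => Ideal.mul_mem_left _ _ (det_mem_detIdeal fun r => ?_)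
    rw [Fin.succAbove_last]
    exact hW (i.succAbove r)
  · let W : Matrix (Fin (b + 1)) (Fin (b + 1)) R :=
      Fin.snoc (fun i => Fin.snoc (V i) 0) (Pi.single (Fin.last b) 1)
    have hdet : W.det = V.det := by
      rw [Matrix.det_succ_row W (Fin.last b), Fintype.sum_eq_single (Fin.last b)]
      · simp [W, Fin.succAbove_last, Matrix.submatrix, ← two_mul, pow_mul]
        rfl
      · intro j hj
        simp [W, hj]
    rw [← hdet]
    refine det_mem_detIdeal fun i => ?_
    change (fun j => W i j.castSucc) ∈ K
    induction i using Fin.lastCases with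
    | last =>
      convert K.zero_mem using 1
      ext j
      simp [W]
    | cast i => simpa [W] using hV i

theorem detIdeal_pi (J : Ideal R) :
    (pi Set.univ fun _ : ι => (J : Submodule R R)).detIdeal = J ^ Fintype.card ι := by
  refine le_antisymm (detIdeal_le_iff.2 fun V hV => ?_) ?_
  · rw [Matrix.det_apply, ← Finset.card_univ, ← Finset.prod_const]
    refine Ideal.sum_mem _ fun σ _ => Submodule.smul_of_tower_mem _ _ (Ideal.prod_mem_prod ?_)
    exact fun i _ => (mem_pi.1 (hV (σ i))) i trivial
  · rw [← Finset.card_univ, ← Finset.prod_const, ← Ideal.span_eq J, Ideal.prod_span,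
      Ideal.span_le]
    intro x hx
    obtain ⟨g, hg, rfl⟩ := Set.mem_finsetProd _ _ _ |>.1 hx
    rw [← Matrix.det_diagonal]
    refine det_mem_detIdeal fun i => mem_pi.2 fun j _ => ?_
    rcases eq_or_ne i j with rfl | hij
    · simpa using hg (Finset.mem_univ i)
    · simp [Matrix.diagonal_apply_ne _ hij]

end Submodule

theorem Matrix.det_one_add_vecMulVec {R ι : Type*} [CommRing R] [Fintype ι] [DecidableEq ι]
    (u v : ι → R) : (1 + Matrix.vecMulVec u v).det = 1 + v ⬝ᵥ u := by
  rw [Matrix.vecMulVec_eq Unit, Matrix.det_one_add_replicateCol_mul_replicateRow]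

section Family

variable (R : Type*) [CommRing R] {M : Type*} [AddCommGroup M] [Module R M]

noncomputable def fittingIdealOfFamily {ι : Type*} [Fintype ι] [DecidableEq ι] (g : ι → M) :
    Ideal R :=
  (LinearMap.ker (Fintype.linearCombination R g)).detIdeal

variable {R}

theorem fittingIdealOfFamily_comp_equiv {ι ι' : Type*} [Fintype ι] [DecidableEq ι] [Fintype ι']
    [DecidableEq ι'] (g : ι' → M) (e : ι ≃ ι') :
    fittingIdealOfFamily R (g ∘ e) = fittingIdealOfFamily R g := by
  have hker : LinearMap.ker (Fintype.linearCombination R (g ∘ e)) =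
      (LinearMap.ker (Fintype.linearCombination R g)).comap (LinearMap.funLeft R R e.symm) := by
    ext x
    simp only [LinearMap.mem_ker, Submodule.mem_comap, Fintype.linearCombination_apply,
      LinearMap.funLeft_apply]
    rw [← e.sum_comp]
    simp
  rw [fittingIdealOfFamily, hker, Submodule.detIdeal_comap_funLeft]
  rfl

theorem fittingIdealOfFamily_snoc {b : ℕ} (g : Fin b → M) (c : Fin b → R) :
    fittingIdealOfFamily R (Fin.snoc g (Fintype.linearCombination R g c) : Fin (b + 1) → M) =
      fittingIdealOfFamily R g := by
  -- `x ᵥ* A = x + x (last b) • snoc c 0`: the last coordinate is added, weighted by `c`,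
  -- to the first `b` ones, so `ker` of the longer family is `K ⊕ R` in the new coordinates
  let A : Matrix (Fin (b + 1)) (Fin (b + 1)) R :=
    1 + Matrix.vecMulVec (Pi.single (Fin.last b) 1) (Fin.snoc c 0)
  have hA : IsUnit A.det := by simp [A, Matrix.det_one_add_vecMulVec]
  have hker : LinearMap.ker (Fintype.linearCombination R
      (Fin.snoc g (Fintype.linearCombination R g c) : Fin (b + 1) → M)) =
      ((LinearMap.ker (Fintype.linearCombination R g)).comap
        (LinearMap.funLeft R R Fin.castSucc)).comap A.vecMulLinear := by
    ext x
    simp [A, Fintype.linearCombination_apply, Fin.sum_univ_castSucc, Matrix.vecMul_vecMulVec,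
      Finset.smul_sum, add_smul, mul_smul, Finset.sum_add_distrib]
  rw [fittingIdealOfFamily, hker, Submodule.detIdeal_comap_vecMulLinear _ hA,
    Submodule.detIdeal_comap_funLeft_castSucc]
  rfl

theorem fittingIdealOfFamily_append {b : ℕ} {g : Fin b → M}
    (hg : Submodule.span R (Set.range g) = ⊤) {k : ℕ} (h : Fin k → M) :
    fittingIdealOfFamily R (Fin.append g h) = fittingIdealOfFamily R g := by
  induction k with
  | zero =>
    rw [Fin.append_right_nil g h rfl]
    exact fittingIdealOfFamily_comp_equiv g (finCongr (Nat.add_zero b))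
  | succ k ih =>
    have hspan : Submodule.span R (Set.range (Fin.append g (Fin.init h))) = ⊤ :=
      top_le_iff.1 <| hg ▸ Submodule.span_mono fun _ ⟨i, hi⟩ => ⟨Fin.castAdd k i, by simpa⟩
    obtain ⟨c, hc⟩ :=
      (span_range_eq_top_iff_surjective_fintypeLinearCombination R _).1 hspan (h (Fin.last k))
    rw [← Fin.snoc_init_self h, Fin.append_snoc, ← hc, fittingIdealOfFamily_snoc, ih]

theorem fittingIdealOfFamily_eq {b b' : ℕ} {g : Fin b → M} {g' : Fin b' → M}
    (hg : Submodule.span R (Set.range g) = ⊤) (hg' : Submodule.span R (Set.range g') = ⊤) :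
    fittingIdealOfFamily R g = fittingIdealOfFamily R g' := by
  have hflip : Fin.append g' g = Fin.append g g' ∘ finAddFlip := by
    funext i
    induction i using Fin.addCases <;> simp
  rw [← fittingIdealOfFamily_append hg g', ← fittingIdealOfFamily_append hg' g, hflip,
    fittingIdealOfFamily_comp_equiv]

end Family

section Fitting

variable {R : Type*} [CommRing R] {M : Type*} [AddCommGroup M] [Module R M]

theorem minorsIdeal_eq_detIdeal_range {a b : ℕ} (H : Matrix (Fin a) (Fin b) R) :
    minorsIdeal R H = (LinearMap.range H.vecMulLinear).detIdeal := by
  rw [range_vecMulLinear]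
  refine le_antisymm (Ideal.span_le.2 ?_) (Submodule.detIdeal_le_iff.2 fun V hV => ?_)
  · rintro _ ⟨f, rfl⟩
    exact Submodule.det_mem_detIdeal fun i => Submodule.subset_span ⟨f i, rfl⟩
  · choose C hC using fun i => Submodule.mem_span_range_iff_exists_fun R |>.1 (hV i)
    have hVC : V = fun i => ∑ t, C i t • H t := funext fun i => (hC i).symm
    -- Cauchy–Binet: multilinearity in the rows expands `det (C * H)` into minors of `H`
    change Matrix.detRowAlternating.toMultilinearMap V ∈ _
    rw [hVC, MultilinearMap.map_sum]
    refine Ideal.sum_mem _ fun f _ => ?_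
    rw [MultilinearMap.map_smul_univ]
    exact Ideal.mul_mem_left _ _ (Ideal.subset_span ⟨f, rfl⟩)

theorem LinearMap.eq_fintypeLinearCombination {ι : Type*} [Fintype ι] [DecidableEq ι]
    (π : (ι → R) →ₗ[R] M) : π = Fintype.linearCombination R fun i => π (Pi.single i 1) := by
  ext i
  simp

theorem detIdeal_ker_eq_of_surjective {b b' : ℕ} {π : (Fin b → R) →ₗ[R] M}
    {π' : (Fin b' → R) →ₗ[R] M} (hπ : Function.Surjective π) (hπ' : Function.Surjective π') :
    (LinearMap.ker π).detIdeal = (LinearMap.ker π').detIdeal := by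
  have hspan {k : ℕ} {φ : (Fin k → R) →ₗ[R] M} (hφ : Function.Surjective φ) :
      Submodule.span R (Set.range fun i => φ (Pi.single i 1)) = ⊤ := by
    rwa [span_range_eq_top_iff_surjective_fintypeLinearCombination,
      ← φ.eq_fintypeLinearCombination]
  rw [π.eq_fintypeLinearCombination, π'.eq_fintypeLinearCombination]
  exact fittingIdealOfFamily_eq (hspan hπ) (hspan hπ')

theorem fitIdeal_eq_detIdeal_ker {b : ℕ} (π : (Fin b → R) →ₗ[R] M) (hπ : Function.Surjective π)
    (hfg : (LinearMap.ker π).FG) : fitIdeal R M = (LinearMap.ker π).detIdeal := by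
  refine le_antisymm (iSup_le fun a => iSup_le fun b' => iSup_le fun H => iSup_le fun π' =>
    iSup_le fun hpres => ?_) ?_
  · rw [minorsIdeal_eq_detIdeal_range, ← hpres.2, detIdeal_ker_eq_of_surjective hpres.1 hπ]
  · obtain ⟨a, w, hw⟩ := Submodule.fg_iff_exists_fin_generating_family.1 hfg
    have hpres : IsPresentation R (Matrix.of w) M π :=
      ⟨hπ, by rw [range_vecMulLinear]; exact hw.symm⟩
    refine le_iSup_of_le a <| le_iSup_of_le b <| le_iSup_of_le (Matrix.of w) <|
      le_iSup_of_le π <| le_iSup_of_le hpres ?_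
    rw [minorsIdeal_eq_detIdeal_range, hpres.2]

end Fitting

namespace Ideal

variable {R : Type*} [Ring R] {n : Type*} [Fintype n] [DecidableEq n]

theorem exists_eq_matrix_of_isTwoSided [Nonempty n] (I : Ideal (Matrix n n R)) [I.IsTwoSided] :
    ∃ J : Ideal R, I = J.matrix n := by
  refine ⟨(TwoSidedIdeal.equivMatrix.symm I.toTwoSided).asIdeal, ?_⟩
  rw [← TwoSidedIdeal.asIdeal_matrix, ← TwoSidedIdeal.equivMatrix_apply,
    Equiv.apply_symm_apply]
  ext
  simp

theorem fg_of_fg_matrix [Nonempty n] {J : Ideal R} (h : (J.matrix n).FG) : J.FG := by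
  obtain ⟨i⟩ := ‹Nonempty n›
  have hJ : ((J.matrix n).restrictScalars R).map (Matrix.entryLinearMap R R i i) = J := by
    refine le_antisymm (Submodule.map_le_iff_le_comap.2 fun x hx => hx i i) fun r hr => ?_
    refine ⟨Matrix.single i i r, fun k l => ?_, by simp⟩
    rw [Matrix.single_apply]
    split_ifs <;> simp [hr]
  exact hJ ▸ (Submodule.FG.restrictScalars (R := R) h).map _

end Ideal

section MatrixQuotient

variable {R : Type*} [CommRing R] {n : ℕ}

theorem single_one_mul_eq_of_pi_single (z : Fin n) (a : Matrix (Fin n) (Fin n) R) :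
    Matrix.single z z (1 : R) * a = Matrix.of (Pi.single z (a z)) := by
  rw [Matrix.single_mul_eq_updateRow_zero, one_smul]
  rfl

theorem fitIdeal_eComponent_quotient_matrix {J : Ideal R} (hJ : J.FG) (z : Fin n) :
    fitIdeal R (eComponent n R (Matrix (Fin n) (Fin n) R ⧸ J.matrix (Fin n)) z) = J ^ n := by
  set Q := Matrix (Fin n) (Fin n) R ⧸ J.matrix (Fin n)
  let mk : Matrix (Fin n) (Fin n) R →ₗ[R] Q := (Submodule.mkQ (J.matrix (Fin n))).restrictScalars R
  have heMul (a : Matrix (Fin n) (Fin n) R) :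
      eMul n R Q z (mk a) = mk (Matrix.of (Pi.single z (a z))) := by
    change Matrix.single z z (1 : R) • Submodule.mkQ (J.matrix (Fin n)) a = _
    rw [← map_smul (Submodule.mkQ (J.matrix (Fin n))), smul_eq_mul, single_one_mul_eq_of_pi_single]
    rfl
  let row : (Fin n → R) →ₗ[R] Q :=
    mk ∘ₗ (Matrix.ofLinearEquiv R).toLinearMap ∘ₗ LinearMap.single R (fun _ => Fin n → R) z
  have hrow (v : Fin n → R) : row v ∈ eComponent n R Q z :=
    ⟨row v, by
      have h := heMul (Matrix.of (Pi.single z v))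
      rwa [show Matrix.of (Pi.single z v) z = v from
        Pi.single_eq_same (M := fun _ => Fin n → R) z v] at h⟩
  let π : (Fin n → R) →ₗ[R] eComponent n R Q z := row.codRestrict _ hrow
  have hπ : Function.Surjective π := by
    rintro ⟨_, a', rfl⟩
    obtain ⟨a, rfl⟩ := Submodule.mkQ_surjective _ a'
    exact ⟨a z, Subtype.ext (heMul a).symm⟩
  have hker : LinearMap.ker π = Submodule.pi Set.univ fun _ => (J : Submodule R R) := by
    ext v
    simp only [π, LinearMap.mem_ker, ← Submodule.coe_eq_zero, LinearMap.codRestrict_apply]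
    simp only [row, mk, LinearMap.comp_apply, LinearMap.restrictScalars_apply, Submodule.mkQ_apply]
    rw [Submodule.Quotient.mk_eq_zero, Ideal.mem_matrix, Submodule.mem_pi]
    refine ⟨fun h j _ => by simpa using h z j, fun h i j => ?_⟩
    rcases eq_or_ne i z with rfl | hi
    · simpa using h j trivial
    · simp [hi]
  rw [fitIdeal_eq_detIdeal_ker π hπ (hker ▸ Submodule.fg_pi fun _ => hJ), hker,
    Submodule.detIdeal_pi, Fintype.card_fin]

end MatrixQuotient

/-- Every finitely generated two-sided ideal `I` of `Λ = M_{n×n}(R)` is of the form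
`I = M_{n×n}(J)` for an ideal `J` of `R` (i.e. `x ∈ I` iff all entries of `x` lie in `J`),
and for such `I` one has `Fit_Λ(Λ/I) = J^n`. -/
theorem fitIdeal_quotient_twoSidedIdeal (n : ℕ) (hn : 0 < n) (R : Type*) [CommRing R]
    (I : Ideal (Matrix (Fin n) (Fin n) R)) (hfg : I.FG)
    (htwosided : ∀ x ∈ I, ∀ y : Matrix (Fin n) (Fin n) R, x * y ∈ I) :
    ∃ J : Ideal R,
      (∀ x : Matrix (Fin n) (Fin n) R, x ∈ I ↔ ∀ i j : Fin n, x i j ∈ J) ∧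
      fitIdeal R (eComponent n R (Matrix (Fin n) (Fin n) R ⧸ I) ⟨0, hn⟩) = J ^ n := by
  have : NeZero n := ⟨hn.ne'⟩
  have : I.IsTwoSided := ⟨fun y hx => htwosided _ hx y⟩
  obtain ⟨J, rfl⟩ := I.exists_eq_matrix_of_isTwoSided
  exact ⟨J, J.mem_matrix (Fin n), fitIdeal_eComponent_quotient_matrix (Ideal.fg_of_fg_matrix hfg) _⟩
end

section
/- Let R be a commutative ring, n ≥ 1, Λ = M_{n×n}(R), and α ∈ Λ. Then the Fitting invariant of the quotient of Λ by the principal left ideal Λα is the principal R-ideal generated by the determinant of α: Fit_Λ(Λ/Λα) = R·det(α). -/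
open Matrix

/-!
`e₁₁(Λ/Λα)` is presented by `α` itself: sending `v ∈ Rⁿ` to the class of the matrix with
first row `v` identifies `Rⁿ/Rⁿα` with it. So it suffices that a module `M` presented by a
square matrix `α` has Fitting ideal `(det α)`. One inclusion is the presentation itself. For
the other, let `B` be a square matrix whose rows are relations of another presentation
`R^b ↠ M`. Lifting the generators of each presentation through the other gives matrices `P`,
`Q` for which the rows of `BQ` and `1 - PQ` are relations of `Rⁿ ↠ M`, hence multiples of `α`,
and then `[[B, 0], [-P, 1]] [[1, Q], [0, 1]] = [[B, X], [-P, Y]] diag(1, α)` gives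
`det B ∈ (det α)`.
-/

namespace Matrix

variable {R : Type*} [CommRing R] {ι κ : Type*}

theorem exists_eq_mul_of_row_mem_range [Fintype κ] {C : Matrix ι κ R} {α : Matrix κ κ R}
    (h : ∀ i, C i ∈ LinearMap.range α.vecMulLinear) : ∃ X : Matrix ι κ R, C = X * α := by
  choose w hw using h
  exact ⟨of w, funext fun i => (hw i).symm⟩

theorem map_vecMul_eq_of_map_row [Fintype ι] [DecidableEq ι] {M : Type*} [AddCommGroup M]
    [Module R M] (π : (ι → R) →ₗ[R] M) (π₀ : (κ → R) →ₗ[R] M) {Q : Matrix ι κ R}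
    (hQ : ∀ i, π₀ (Q i) = π (Pi.single i 1)) (v : ι → R) : π₀ (v ᵥ* Q) = π v := by
  conv_rhs => rw [pi_eq_sum_univ' v]
  simp [vecMul_eq_sum, hQ]

variable [Fintype ι] [DecidableEq ι] [Fintype κ] [DecidableEq κ]

theorem det_mem_span_det_of_mul_eq {B : Matrix ι ι R} {α : Matrix κ κ R}
    {P : Matrix κ ι R} {Q X : Matrix ι κ R} {Y : Matrix κ κ R}
    (hX : B * Q = X * α) (hY : 1 - P * Q = Y * α) : B.det ∈ Ideal.span {α.det} := by
  have hfactor : fromBlocks B 0 (-P) 1 * fromBlocks 1 Q 0 1 =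
      fromBlocks B X (-P) Y * fromBlocks 1 0 0 α := by
    simp [fromBlocks_multiply, hX, ← hY, neg_add_eq_sub]
  have hdet := congrArg det hfactor
  rw [det_mul, det_mul, det_fromBlocks_zero₁₂, det_fromBlocks_zero₂₁,
    det_fromBlocks_zero₁₂] at hdet
  simp only [det_one, mul_one, one_mul] at hdet
  exact Ideal.mem_span_singleton'.2 ⟨_, hdet.symm⟩

theorem det_mem_span_det_of_row_mem_ker {M : Type*} [AddCommGroup M] [Module R M]
    {π : (ι → R) →ₗ[R] M} {π₀ : (κ → R) →ₗ[R] M}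
    (hπ : Function.Surjective π) (hπ₀ : Function.Surjective π₀) {α : Matrix κ κ R}
    (hker : LinearMap.ker π₀ ≤ LinearMap.range α.vecMulLinear)
    {B : Matrix ι ι R} (hB : ∀ i, B i ∈ LinearMap.ker π) : B.det ∈ Ideal.span {α.det} := by
  choose Q hQ using fun i => hπ₀ (π (Pi.single i 1))
  choose P hP using fun j => hπ (π₀ (Pi.single j 1))
  have hQ' := map_vecMul_eq_of_map_row π π₀ (Q := of Q) hQ
  obtain ⟨X, hX⟩ := exists_eq_mul_of_row_mem_range (C := B * of Q) fun i =>
    hker (by simpa [mul_apply_eq_vecMul, hQ'] using hB i)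
  obtain ⟨Y, hY⟩ := exists_eq_mul_of_row_mem_range (C := 1 - of P * of Q) fun j =>
    have hone : (1 : Matrix κ κ R) j = Pi.single j 1 := funext fun _ => one_eq_pi_single
    hker <| show π₀ ((1 : Matrix κ κ R) j - P j ᵥ* of Q) = 0 by
      rw [map_sub, hone, hQ', hP, sub_self]
  exact det_mem_span_det_of_mul_eq hX hY

end Matrix

section Fitting

variable {R : Type*} [CommRing R]

theorem minorsIdeal_le_fitIdeal {a b : ℕ} {H : Matrix (Fin a) (Fin b) R} {M : Type*}
    [AddCommGroup M] [Module R M] {π : (Fin b → R) →ₗ[R] M} (h : IsPresentation R H M π) :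
    minorsIdeal R H ≤ fitIdeal R M :=
  le_iSup_of_le a <| le_iSup_of_le b <| le_iSup₂_of_le H π <| le_iSup_of_le h le_rfl

theorem det_mem_minorsIdeal {b : ℕ} (H : Matrix (Fin b) (Fin b) R) :
    H.det ∈ minorsIdeal R H :=
  Ideal.subset_span ⟨id, by rw [submatrix_id_id]⟩

theorem minorsIdeal_le_span_det {n a b : ℕ} {M : Type*} [AddCommGroup M] [Module R M]
    {α : Matrix (Fin n) (Fin n) R} {π₀ : (Fin n → R) →ₗ[R] M} (hπ₀ : Function.Surjective π₀)
    (hker : LinearMap.ker π₀ ≤ LinearMap.range α.vecMulLinear)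
    {H : Matrix (Fin a) (Fin b) R} {π : (Fin b → R) →ₗ[R] M} (h : IsPresentation R H M π) :
    minorsIdeal R H ≤ Ideal.span {α.det} := by
  rw [minorsIdeal, Ideal.span_le]
  rintro _ ⟨f, rfl⟩
  refine det_mem_span_det_of_row_mem_ker h.1 hπ₀ hker fun i => ?_
  rw [h.2]
  exact ⟨Pi.single (f i) 1, single_one_vecMul (f i) H⟩

theorem fitIdeal_eq_span_det_of_isPresentation {n : ℕ} {α : Matrix (Fin n) (Fin n) R}
    {M : Type*} [AddCommGroup M] [Module R M] {π : (Fin n → R) →ₗ[R] M}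
    (h : IsPresentation R α M π) : fitIdeal R M = Ideal.span {α.det} :=
  le_antisymm
    (iSup₂_le fun _ _ => iSup₂_le fun _ _ => iSup_le fun hH =>
      minorsIdeal_le_span_det h.1 h.2.le hH)
    ((Ideal.span_singleton_le_iff_mem _).2 (minorsIdeal_le_fitIdeal h (det_mem_minorsIdeal α)))

end Fitting

namespace Matrix

variable {m R : Type*} [DecidableEq m] [CommRing R]

noncomputable def singleRow (i : m) : (m → R) →ₗ[R] Matrix m m R :=
  (ofLinearEquiv R).toLinearMap ∘ₗ LinearMap.single R (fun _ => m → R) i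

@[simp]
theorem singleRow_apply_self (i : m) (v : m → R) : singleRow i v i = v :=
  Pi.single_eq_same (M := fun _ => m → R) i v

@[simp]
theorem singleRow_apply_of_ne {i k : m} (h : k ≠ i) (v : m → R) : singleRow i v k = 0 :=
  Pi.single_eq_of_ne (M := fun _ => m → R) h v

variable [Fintype m]

theorem single_one_mul (i : m) (β : Matrix m m R) : single i i 1 * β = singleRow i (β i) := by
  ext k j
  by_cases hk : k = i
  · subst hk; simp
  · simp [hk]

theorem singleRow_mul (i : m) (v : m → R) (β : Matrix m m R) :
    singleRow i v * β = singleRow i (v ᵥ* β) := by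
  ext k j
  by_cases hk : k = i
  · subst hk; simp [mul_apply_eq_vecMul]
  · simp [hk, mul_apply_eq_vecMul]

theorem singleRow_mem_span_singleton_iff {i : m} {v : m → R} {α : Matrix m m R} :
    singleRow i v ∈ Ideal.span {α} ↔ v ∈ LinearMap.range α.vecMulLinear := by
  rw [Ideal.mem_span_singleton']
  constructor
  · rintro ⟨β, hβ⟩
    exact ⟨β i, show (β * α) i = v by rw [hβ, singleRow_apply_self]⟩
  · rintro ⟨w, rfl⟩
    exact ⟨singleRow i w, singleRow_mul i w α⟩

end Matrix

section RowPresentation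

variable {n : ℕ} {R : Type*} [CommRing R] (α : Matrix (Fin n) (Fin n) R) (i : Fin n)

local notation "Λ" => Matrix (Fin n) (Fin n) R

theorem eMul_quotient_mk (β : Λ) :
    eMul n R (Λ ⧸ Ideal.span {α}) i (Submodule.Quotient.mk β) =
      Submodule.Quotient.mk (singleRow i (β i)) := by
  rw [eMul, LinearMap.coe_mk, AddHom.coe_mk, ← Submodule.Quotient.mk_smul, smul_eq_mul,
    single_one_mul]

theorem mkQ_singleRow_mem_eComponent (v : Fin n → R) :
    ((Ideal.span {α}).mkQ.restrictScalars R ∘ₗ singleRow i) v ∈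
      eComponent n R (Λ ⧸ Ideal.span {α}) i :=
  ⟨Submodule.Quotient.mk (singleRow i v), by simp [eMul_quotient_mk]⟩

noncomputable def rowPresentation : (Fin n → R) →ₗ[R] eComponent n R (Λ ⧸ Ideal.span {α}) i :=
  LinearMap.codRestrict _ _ (mkQ_singleRow_mem_eComponent α i)

theorem isPresentation_rowPresentation :
    IsPresentation R α (eComponent n R (Λ ⧸ Ideal.span {α}) i) (rowPresentation α i) := by
  constructor
  · rintro ⟨_, y, rfl⟩
    obtain ⟨β, rfl⟩ := Submodule.Quotient.mk_surjective _ y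
    exact ⟨β i, Subtype.ext (eMul_quotient_mk α i β).symm⟩
  · rw [rowPresentation, LinearMap.ker_codRestrict]
    ext v
    simp [singleRow_mem_span_singleton_iff]

end RowPresentation

/-- For `α ∈ Λ = M_{n×n}(R)`, the Fitting invariant of the quotient of `Λ` by the
principal left ideal `Λα` is the principal `R`-ideal generated by `det(α)`:
`Fit_Λ(Λ/Λα) = R·det(α)`. -/
theorem fitIdeal_quotient_principal (n : ℕ) (hn : 0 < n) (R : Type*) [CommRing R]
    (α : Matrix (Fin n) (Fin n) R) :
    fitIdeal R (eComponent n R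
        (Matrix (Fin n) (Fin n) R ⧸ (Ideal.span {α} : Ideal (Matrix (Fin n) (Fin n) R)))
        ⟨0, hn⟩) =
      Ideal.span {α.det} :=
  fitIdeal_eq_span_det_of_isPresentation (isPresentation_rowPresentation α ⟨0, hn⟩)
end
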